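/- arXiv:2104.08228 — 2 statements merged into one kernel-verified Lean document; each statement's English description precedes it below -/
import Mathlib

section
/- Fix T > 0 and δ ∈ (0, 1]. Define β(x) = x² if |x| < T and β(x) = 2δT|x| + T²(1 − 2δ) if |x| ≥ T. Define Q(x; x') = x² if |x'| < T, and Q(x; x') = (δT/|x'|)x² + δT|x'| + T²(1 − 2δ) if |x'| ≥ T. Then Q is a surrogate function for β: Q(x'; x') = β(x') for all x', and Q(x; x') ≥ β(x) for all x, x' ∈ ℝ. -/
noncomputable def huber (T δ x : ℝ) : ℝ :=
  if |x| < T then x ^ 2 else 2 * δ * T * |x| + T ^ 2 * (1 - 2 * δ)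

noncomputable def huberSurrogate (T δ x x' : ℝ) : ℝ :=
  if |x'| < T then x ^ 2
  else (δ * T / |x'|) * x ^ 2 + δ * T * |x'| + T ^ 2 * (1 - 2 * δ)

theorem huberSurrogate_isSurrogate (T δ : ℝ) (hT : 0 < T) (hδ0 : 0 < δ) (hδ1 : δ ≤ 1) :
    (∀ x' : ℝ, huberSurrogate T δ x' x' = huber T δ x') ∧
    (∀ x x' : ℝ, huberSurrogate T δ x x' ≥ huber T δ x) := by
  constructor
  · intro x'
    unfold huberSurrogate huber
    split_ifs with h
    · rfl
    · push_neg at h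
      have ha : (0:ℝ) < |x'| := lt_of_lt_of_le hT h
      have hsq : x' ^ 2 = |x'| ^ 2 := (sq_abs x').symm
      field_simp
      ring_nf
      linear_combination δ * hsq
  · intro x x'
    unfold huberSurrogate huber
    split_ifs with h1 h2 h2
    · exact le_refl _
    · push_neg at h2
      have h3 : 0 ≤ |x| + T * (1 - 2 * δ) := by nlinarith
      nlinarith [sq_abs x, mul_nonneg (sub_nonneg.2 h2) h3]
    · -- |x'| ≥ T, |x| < T
      push_neg at h1
      have ha0 : (0:ℝ) < |x'| := lt_of_lt_of_le hT h1
      rw [ge_iff_le, show δ * T / |x'| * x ^ 2 + δ * T * |x'| + T ^ 2 * (1 - 2 * δ)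
          = (δ * T * x ^ 2 + (δ * T * |x'| + T ^ 2 * (1 - 2 * δ)) * |x'|) / |x'| by
        field_simp; ring, le_div_iff₀ ha0]
      have h4 : x ^ 2 ≤ T ^ 2 := by nlinarith [sq_abs x, abs_nonneg x]
      have h5 : δ * T ≤ |x'| := le_trans (by nlinarith) h1
      nlinarith [mul_nonneg (sub_nonneg.2 h4) (sub_nonneg.2 h5),
        mul_nonneg (mul_pos hδ0 hT).le (sq_nonneg (|x'| - T))]
    · -- |x'| ≥ T, |x| ≥ T
      push_neg at h1 h2
      have ha0 : (0:ℝ) < |x'| := lt_of_lt_of_le hT h1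
      rw [ge_iff_le, show δ * T / |x'| * x ^ 2 + δ * T * |x'| + T ^ 2 * (1 - 2 * δ)
          = (δ * T * x ^ 2 + (δ * T * |x'| + T ^ 2 * (1 - 2 * δ)) * |x'|) / |x'| by
        field_simp; ring, le_div_iff₀ ha0]
      nlinarith [sq_abs x, sq_nonneg (|x| - |x'|), mul_pos hδ0 hT,
        mul_nonneg (mul_pos hδ0 hT).le (sq_nonneg (|x| - |x'|))]
end

section
/- Let ρ : ℝ → ℝ be even, differentiable, with ρ(0) = 0 and such that ρ'(u)/u is nonincreasing on (0, ∞). For fixed u' ≠ 0, set a = ρ'(u')/u' and b = ρ(u') − (a/2)u'². Then q(u) = (a/2)u² + b satisfies q(u') = ρ(u'), q'(u') = ρ'(u'), and q(u) ≥ ρ(u) for all u ∈ ℝ (i.e., q is a quadratic surrogate for ρ at u'). -/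
theorem quadratic_surrogate_for_potential (ρ : ℝ → ℝ)
    (heven : ∀ u, ρ (-u) = ρ u) (hdiff : Differentiable ℝ ρ) (h0 : ρ 0 = 0)
    (hmono : AntitoneOn (fun u => deriv ρ u / u) (Set.Ioi (0 : ℝ)))
    (u' : ℝ) (hu' : u' ≠ 0) :
    let a := deriv ρ u' / u'
    let b := ρ u' - (a / 2) * u' ^ 2
    let q := fun u => (a / 2) * u ^ 2 + b
    q u' = ρ u' ∧ HasDerivAt q (deriv ρ u') u' ∧ ∀ u, q u ≥ ρ u := by
  intro a b q
  have hodd : ∀ x, deriv ρ (-x) = -deriv ρ x := by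
    intro x
    have h1 : deriv (fun y => ρ (-y)) x = -deriv ρ (-x) := deriv_comp_neg ρ x
    have h2 : (fun y => ρ (-y)) = ρ := funext heven
    rw [h2] at h1
    linarith
  have hq' : ∀ u : ℝ, HasDerivAt q (a * u) u := by
    intro u
    have h1 : HasDerivAt (fun u : ℝ => u ^ 2) (2 * u) u := by
      simpa using (hasDerivAt_pow 2 u)
    have := ((h1.const_mul (a / 2)).add_const b)
    exact this.congr_deriv (by ring)
  have hqu' : q u' = ρ u' := by simp [q, b]
  refine ⟨hqu', ?_, ?_⟩
  · have := hq' u'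
    have ha : a * u' = deriv ρ u' := by simp only [a]; field_simp
    rwa [ha] at this
  -- main part
  obtain ⟨c, hc_def⟩ : ∃ c : ℝ, c = |u'| := ⟨|u'|, rfl⟩
  have hc : 0 < c := by rw [hc_def]; exact abs_pos.mpr hu'
  have hac : deriv ρ c / c = a := by
    rcases lt_or_gt_of_ne hu' with hlt | hgt
    · rw [hc_def, abs_of_neg hlt, hodd, neg_div_neg_eq]
    · rw [hc_def, abs_of_pos hgt]
  set h := fun u => q u - ρ u with hh_def
  have hh' : ∀ u : ℝ, HasDerivAt h (a * u - deriv ρ u) u :=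
    fun u => (hq' u).sub (hdiff u).hasDerivAt
  have hhd : Differentiable ℝ h := fun u => (hh' u).differentiableAt
  have hderiv : ∀ u, deriv h u = a * u - deriv ρ u := fun u => (hh' u).deriv
  have hhc : h c = 0 := by
    have hρc : ρ c = ρ u' := by
      rcases lt_or_gt_of_ne hu' with hlt | hgt
      · rw [hc_def, abs_of_neg hlt, heven]
      · rw [hc_def, abs_of_pos hgt]
    have hqc : q c = q u' := by
      have : c ^ 2 = u' ^ 2 := by rw [hc_def, sq_abs]
      simp [q, this]
    simp [h, hqc, hqu', hρc]
  have hanti : AntitoneOn h (Set.Icc 0 c) := by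
    apply antitoneOn_of_deriv_nonpos (convex_Icc 0 c) hhd.continuous.continuousOn
      (hhd.differentiableOn)
    intro x hx
    rw [interior_Icc] at hx
    obtain ⟨hx0, hxc⟩ := hx
    rw [hderiv]
    have := hmono (Set.mem_Ioi.mpr hx0) (Set.mem_Ioi.mpr hc) hxc.le
    dsimp only at this
    rw [hac] at this
    have := (le_div_iff₀ hx0).mp this
    linarith
  have hmonoh : MonotoneOn h (Set.Ici c) := by
    apply monotoneOn_of_deriv_nonneg (convex_Ici c) hhd.continuous.continuousOn
      (hhd.differentiableOn)
    intro x hx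
    rw [interior_Ici] at hx
    have hx0 : 0 < x := lt_trans hc hx
    rw [hderiv]
    have hle := hmono (Set.mem_Ioi.mpr hc) (Set.mem_Ioi.mpr hx0) (le_of_lt hx)
    dsimp only at hle
    rw [hac] at hle
    have := (div_le_iff₀ hx0).mp hle
    linarith
  have key : ∀ v : ℝ, 0 ≤ v → 0 ≤ h v := by
    intro v hv
    rcases le_total v c with hvc | hcv
    · have := hanti ⟨hv, hvc⟩ ⟨le_of_lt hc, le_refl c⟩ hvc
      linarith [hhc]
    · have := hmonoh (Set.mem_Ici.mpr (le_refl c)) (Set.mem_Ici.mpr hcv) hcv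
      linarith [hhc]
  intro u
  have heq : h |u| = h u := by
    rcases abs_choice u with habs | habs
    · rw [habs]
    · rw [habs]; simp [h, q, heven]
  have := key |u| (abs_nonneg u)
  rw [heq] at this
  simp only [h] at this
  linarith
end
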